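/- arXiv:2302.06927 — 2 statements merged into one kernel-verified Lean document; each statement's English description precedes it below -/
import Mathlib

section
/- Let K ⊆ ℝⁿ be compact and let y = (y_α)_{α ∈ ℕⁿ_d} be a finite real sequence. Then y is the truncated moment sequence of a nonnegative Borel measure supported on K if and only if the Riesz functional L_y is nonnegative on the cone P(K)_d of polynomials of degree at most d nonnegative on K. (Tchakaloff's theorem / finite-dimensional Riesz–Haviland.) -/
/-!
Integrating a polynomial against a representing measure gives necessity. For sufficiency, send `K`
to its moment vectors `m x = (x ^ α)_{|α| ≤ d}` in the finite-dimensional space `ℝ^{ℕⁿ_d}`, whose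
linear functionals are exactly the polynomials of degree `≤ d`. The coordinate `α = 0` is `1` on
`m '' K`, and the convex hull of the compact set `m '' K` is compact (Carathéodory), so Hahn–Banach
separation turns the positivity of `L_y` into `y = ∑ cᵢ • m xᵢ` with `cᵢ ≥ 0` and `xᵢ ∈ K`: the
atomic measure `∑ cᵢ δ_{xᵢ}` represents `y`.
-/

open MvPolynomial MeasureTheory

/-- Total degree of a monomial exponent. -/
def expDeg {n : ℕ} (α : Fin n →₀ ℕ) : ℕ := α.sum fun _ e => e

/-- `μ` is a representing measure on `K` for the truncated sequence `y` of degree `≤ d`. -/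
def Represents {n : ℕ} (d : ℕ) (μ : Measure (Fin n → ℝ)) (K : Set (Fin n → ℝ))
    (y : (Fin n →₀ ℕ) → ℝ) : Prop :=
  μ Kᶜ = 0 ∧ ∀ α : Fin n →₀ ℕ, expDeg α ≤ d → y α = ∫ a, ∏ i, (a i) ^ (α i) ∂μ

/-- The Riesz functional `L_y` applied to a polynomial `p`. -/
noncomputable def riesz {n : ℕ} (y : (Fin n →₀ ℕ) → ℝ) (p : MvPolynomial (Fin n) ℝ) : ℝ :=
  ∑ α ∈ p.support, MvPolynomial.coeff α p * y α

universe u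

section ConvexGeometry

variable {E : Type u} [NormedAddCommGroup E] [NormedSpace ℝ E] [FiniteDimensional ℝ E]

theorem IsCompact.convexHull_of_finiteDimensional {s : Set E} (hs : IsCompact s) :
    IsCompact (convexHull ℝ s) := by
  set N := Module.finrank ℝ E + 1
  have hhull : convexHull ℝ s = ⋃ k : Fin (N + 1),
      (fun wz : (Fin k → ℝ) × (Fin k → E) => ∑ i, wz.1 i • wz.2 i) ''
        (stdSimplex ℝ (Fin k) ×ˢ Set.univ.pi fun _ => s) := by
    refine subset_antisymm (fun x hx => ?_) (Set.iUnion_subset fun k => ?_)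
    · obtain ⟨ι, _, z, w, hzs, hz, hw0, hw1, rfl⟩ := eq_pos_convex_span_of_mem_convexHull hx
      have hcard : Fintype.card ι < N + 1 :=
        Nat.lt_succ_of_le <| hz.card_le_finrank_succ.trans <|
          Nat.add_le_add_right (Submodule.finrank_le _) 1
      let e := Fintype.equivFin ι
      refine Set.mem_iUnion.2 ⟨⟨_, hcard⟩, (w ∘ e.symm, z ∘ e.symm),
        ⟨⟨fun j => (hw0 _).le, ?_⟩, fun j _ => hzs ⟨_, rfl⟩⟩, ?_⟩
      · simpa using (e.symm.sum_comp w).trans hw1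
      · exact e.symm.sum_comp fun i => w i • z i
    · rintro _ ⟨⟨w, z⟩, ⟨⟨hw0, hw1⟩, hz⟩, rfl⟩
      exact (convex_convexHull ℝ s).sum_mem (fun i _ => hw0 i) hw1
        fun i _ => subset_convexHull ℝ s (hz i trivial)
  rw [hhull]
  refine isCompact_iUnion fun k => ((isCompact_stdSimplex ℝ _).prod
    (isCompact_univ_pi fun _ => hs)).image ?_
  fun_prop

theorem exists_sum_smul_eq_of_forall_dual_nonneg {M : Set E} (hM : IsCompact M)
    (φ : StrongDual ℝ E) (hφ : ∀ z ∈ M, φ z = 1) {v : E}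
    (hv : ∀ g : StrongDual ℝ E, (∀ z ∈ M, 0 ≤ g z) → 0 ≤ g v) :
    ∃ (ι : Type u) (_ : Fintype ι) (c : ι → NNReal) (z : ι → E),
      (∀ i, z i ∈ M) ∧ ∑ i, c i • z i = v := by
  have hbound (g : StrongDual ℝ E) (u : ℝ) (hg : ∀ z ∈ M, g z ≤ u) : g v ≤ u * φ v := by
    simpa using hv (u • φ - g) fun z hz => by simpa [hφ z hz] using hg z hz
  have hφv : 0 ≤ φ v := hv φ fun z hz => (hφ z hz).symm ▸ zero_le_one
  rcases hφv.eq_or_lt with hφv | hφv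
  · have hv0 : v = 0 := by
      refine SeparatingDual.eq_zero_of_forall_dual_eq_zero (R := ℝ) fun g => ?_
      have hle : ∀ g : StrongDual ℝ E, g v ≤ 0 := fun g => by
        obtain ⟨u, hu⟩ := hM.bddAbove_image g.continuous.continuousOn
        simpa [← hφv] using hbound g u fun z hz => hu ⟨z, hz, rfl⟩
      linarith [hle g, hle (-g), neg_apply g v]
    exact ⟨PEmpty, inferInstance, PEmpty.elim, PEmpty.elim, fun i => i.elim, by simp [hv0]⟩
  · have hw : (φ v)⁻¹ • v ∈ convexHull ℝ M := by
      by_contra hw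
      obtain ⟨g, u, hgM, hgv⟩ := geometric_hahn_banach_closed_point (convex_convexHull ℝ M)
        hM.convexHull_of_finiteDimensional.isClosed hw
      have := hbound g u fun z hz => (hgM z (subset_convexHull ℝ M hz)).le
      rw [map_smul, smul_eq_mul, lt_inv_mul_iff₀ hφv] at hgv
      linarith
    obtain ⟨ι, _, z, w, hzM, -, hw0, -, hsum⟩ := eq_pos_convex_span_of_mem_convexHull hw
    refine ⟨ι, ‹_›, fun i => (φ v * w i).toNNReal, z, fun i => hzM ⟨i, rfl⟩, ?_⟩
    simp_rw [NNReal.smul_def, Real.coe_toNNReal _ (mul_nonneg hφv.le (hw0 _).le), mul_smul,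
      ← Finset.smul_sum, hsum, smul_inv_smul₀ hφv.ne']

end ConvexGeometry

section Measures

variable {X : Type*} [MeasurableSpace X] [MeasurableSingletonClass X] {ι : Type*} [Fintype ι]

theorem sum_smul_dirac_apply_eq_zero (c : ι → NNReal) (x : ι → X) {s : Set X}
    (hx : ∀ i, x i ∉ s) : (∑ i, c i • Measure.dirac (x i)) s = 0 := by
  simp [Measure.finsetSum_apply, Measure.dirac_apply, hx]

theorem integral_sum_smul_dirac (c : ι → NNReal) (x : ι → X) (f : X → ℝ) :
    ∫ a, f a ∂(∑ i, c i • Measure.dirac (x i)) = ∑ i, c i * f (x i) := by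
  rw [integral_finsetSum_measure fun i _ =>
    (integrable_dirac enorm_lt_top).smul_measure ENNReal.coe_ne_top]
  simp [integral_smul_nnreal_measure, integral_dirac, NNReal.smul_def]

end Measures

theorem Continuous.integrable_of_measure_compl_eq_zero {X : Type*} [TopologicalSpace X]
    [T2Space X] [MeasurableSpace X] [OpensMeasurableSpace X] {μ : Measure X} [IsFiniteMeasure μ]
    {K : Set X} (hK : IsCompact K) (hμK : μ Kᶜ = 0) {f : X → ℝ} (hf : Continuous f) :
    Integrable f μ := by
  have : μ.restrict K = μ := Measure.restrict_eq_self_of_ae_mem (mem_ae_iff.2 hμK)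
  rw [← this]
  exact hf.continuousOn.integrableOn_compact hK

namespace TruncatedMoment

variable {n d : ℕ}

theorem riesz_eq_sum_of_support_subset (y : (Fin n →₀ ℕ) → ℝ) {p : MvPolynomial (Fin n) ℝ}
    {t : Finset (Fin n →₀ ℕ)} (h : p.support ⊆ t) :
    riesz y p = ∑ α ∈ t, coeff α p * y α :=
  Finset.sum_subset h fun α _ hα => by rw [notMem_support_iff.1 hα, zero_mul]

theorem riesz_add (y : (Fin n →₀ ℕ) → ℝ) (p q : MvPolynomial (Fin n) ℝ) :
    riesz y (p + q) = riesz y p + riesz y q := by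
  classical
  rw [riesz_eq_sum_of_support_subset y support_add,
    riesz_eq_sum_of_support_subset y (Finset.subset_union_left (s₂ := q.support)),
    riesz_eq_sum_of_support_subset y (Finset.subset_union_right (s₁ := p.support)),
    ← Finset.sum_add_distrib]
  simp only [coeff_add, add_mul]

theorem riesz_monomial (y : (Fin n →₀ ℕ) → ℝ) (α : Fin n →₀ ℕ) (c : ℝ) :
    riesz y (monomial α c) = c * y α := by
  rw [riesz_eq_sum_of_support_subset y support_monomial_subset, Finset.sum_singleton,
    coeff_monomial, if_pos rfl]

theorem integral_eval_eq_riesz {K : Set (Fin n → ℝ)} (hK : IsCompact K)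
    {y : (Fin n →₀ ℕ) → ℝ} {μ : Measure (Fin n → ℝ)} [IsFiniteMeasure μ]
    (hμ : Represents d μ K y) {p : MvPolynomial (Fin n) ℝ} (hp : p.totalDegree ≤ d) :
    ∫ a, eval a p ∂μ = riesz y p := by
  have hint (α : Fin n →₀ ℕ) : Integrable (fun a : Fin n → ℝ => coeff α p * ∏ i, a i ^ α i) μ :=
    (Continuous.integrable_of_measure_compl_eq_zero hK hμ.1 (by fun_prop)).const_mul _
  simp_rw [eval_eq', integral_finsetSum _ fun α _ => hint α, integral_const_mul, riesz]
  exact Finset.sum_congr rfl fun α hα => by rw [hμ.2 α ((le_totalDegree hα).trans hp)]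

theorem riesz_nonneg_of_represents {K : Set (Fin n → ℝ)} (hK : IsCompact K)
    {y : (Fin n →₀ ℕ) → ℝ} {μ : Measure (Fin n → ℝ)} [IsFiniteMeasure μ]
    (hμ : Represents d μ K y) {p : MvPolynomial (Fin n) ℝ} (hp : p.totalDegree ≤ d)
    (hpK : ∀ a ∈ K, 0 ≤ eval a p) : 0 ≤ riesz y p := by
  rw [← integral_eval_eq_riesz hK hμ hp]
  exact integral_nonneg_of_ae <| measure_mono_null (fun a ha haK => ha (hpK a haK)) hμ.1

-- The index set `ℕⁿ_d` of a truncated moment sequence.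
variable (n d) in
abbrev ExpDegLE := {α : Fin n →₀ ℕ // expDeg α ≤ d}

instance : Finite (ExpDegLE n d) := (Finsupp.finite_of_degree_le d).to_subtype

noncomputable instance : Fintype (ExpDegLE n d) := Fintype.ofFinite _

variable (n d) in
def momentVector (x : Fin n → ℝ) : ExpDegLE n d → ℝ := fun α => ∏ i, x i ^ α.1 i

theorem continuous_momentVector : Continuous (momentVector n d) := by
  unfold momentVector; fun_prop

theorem momentVector_zero (x : Fin n → ℝ) : momentVector n d x ⟨0, Nat.zero_le d⟩ = 1 := by
  simp [momentVector]

noncomputable def polyOfCoeffs (c : ExpDegLE n d → ℝ) : MvPolynomial (Fin n) ℝ :=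
  ∑ α, monomial α.1 (c α)

theorem totalDegree_polyOfCoeffs_le (c : ExpDegLE n d → ℝ) : (polyOfCoeffs c).totalDegree ≤ d :=
  (totalDegree_finsetSum _ _).trans <| Finset.sup_le fun α _ =>
    (totalDegree_monomial_le _ _).trans α.2

theorem eval_polyOfCoeffs (c : ExpDegLE n d → ℝ) (x : Fin n → ℝ) :
    eval x (polyOfCoeffs c) = ∑ α, c α * momentVector n d x α := by
  simp [polyOfCoeffs, momentVector, eval_monomial, Finsupp.prod_pow]

theorem riesz_polyOfCoeffs (y : (Fin n →₀ ℕ) → ℝ) (c : ExpDegLE n d → ℝ) :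
    riesz y (polyOfCoeffs c) = ∑ α, c α * y α.1 := by
  refine (map_sum (AddMonoidHom.mk' (riesz y) (riesz_add y)) _ _).trans ?_
  simp [riesz_monomial]

theorem exists_represents_of_riesz_nonneg {K : Set (Fin n → ℝ)} (hK : IsCompact K)
    {y : (Fin n →₀ ℕ) → ℝ}
    (hy : ∀ p : MvPolynomial (Fin n) ℝ, p.totalDegree ≤ d → (∀ a ∈ K, 0 ≤ eval a p) →
      0 ≤ riesz y p) :
    ∃ μ : Measure (Fin n → ℝ), IsFiniteMeasure μ ∧ Represents d μ K y := by
  have hdual (g : StrongDual ℝ (ExpDegLE n d → ℝ))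
      (hg : ∀ z ∈ momentVector n d '' K, 0 ≤ g z) : 0 ≤ g fun α => y α.1 := by
    set c : ExpDegLE n d → ℝ := fun α => g fun β => if α = β then 1 else 0
    have hg_apply (v : ExpDegLE n d → ℝ) : g v = ∑ α, c α * v α := by
      simpa [c, mul_comm] using LinearMap.pi_apply_eq_sum_univ g.toLinearMap v
    have := hy (polyOfCoeffs c) (totalDegree_polyOfCoeffs_le c) fun x hx => by
      simpa [eval_polyOfCoeffs, hg_apply] using hg _ ⟨x, hx, rfl⟩
    simpa [riesz_polyOfCoeffs, hg_apply] using this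
  obtain ⟨ι, _, c, z, hzK, hsum⟩ := exists_sum_smul_eq_of_forall_dual_nonneg
    (hK.image continuous_momentVector) (ContinuousLinearMap.proj ⟨0, Nat.zero_le d⟩)
    (by rintro _ ⟨x, -, rfl⟩; exact momentVector_zero x) hdual
  choose x hxK hxz using hzK
  refine ⟨∑ i, c i • Measure.dirac (x i), inferInstance,
    sum_smul_dirac_apply_eq_zero c x fun i hi => hi (hxK i), fun α hα => ?_⟩
  rw [integral_sum_smul_dirac]
  simpa [← hxz, momentVector, NNReal.smul_def] using (congrFun hsum ⟨α, hα⟩).symm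

end TruncatedMoment

/-- Tchakaloff's theorem: for compact `K`, `y` is moment-representable on `K` iff the
Riesz functional `L_y` is nonnegative on the cone of polynomials of degree `≤ d`
nonnegative on `K`. -/
theorem stmt4 {n d : ℕ} (K : Set (Fin n → ℝ)) (hK : IsCompact K)
    (y : (Fin n →₀ ℕ) → ℝ) :
    (∃ μ : Measure (Fin n → ℝ), IsFiniteMeasure μ ∧ Represents d μ K y) ↔
      ∀ p : MvPolynomial (Fin n) ℝ, p.totalDegree ≤ d →
        (∀ a ∈ K, 0 ≤ MvPolynomial.eval a p) → 0 ≤ riesz y p :=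
  ⟨fun ⟨_, _, hμ⟩ _ hp hpK => TruncatedMoment.riesz_nonneg_of_represents hK hμ hp hpK,
    TruncatedMoment.exists_represents_of_riesz_nonneg hK⟩
end

section
/- Let K ⊆ ℝⁿ be compact and y = (y_α)_{α ∈ ℕⁿ_d} with y₀ > 0. Then y is NOT representable by a nonnegative Borel measure supported on K if and only if there exists a polynomial p ∈ ℝ[x]_{≤d} strictly positive on K with L_y(p) = 0. -/
open MvPolynomial MeasureTheory

/-! The conic hull of the moment vectors `(x ^ α)_{|α| ≤ d}` of points `x ∈ K` consists of moment
sequences on `K` (finite sums of Dirac masses). Every moment vector has `α = 0` coordinate `1`, so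
the hull is the cone over the convex hull of a compact set, which is compact by Carathéodory; hence
the hull is closed. If `y` is not a moment sequence, it is strictly separated from this cone by a
linear functional, i.e. by a polynomial `q` of degree `≤ d` with `q ≥ 0` on `K` and `L_y(q) < 0`;
since `y₀ > 0`, adding the constant `-L_y(q) / y₀` yields `p > 0` on `K` with `L_y(p) = 0`.
Conversely, for a representing measure `μ` (nonzero since `y₀ > 0`) we get `L_y(p) = ∫ p dμ > 0`. -/

open Set Function

theorem LinearMap.apply_eq_sum_smul_single {ι R M : Type*} [CommSemiring R] [AddCommMonoid M]
    [Module R M] [Fintype ι] [DecidableEq ι] (f : (ι → R) →ₗ[R] M) (x : ι → R) :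
    f x = ∑ i, x i • f (Pi.single i 1) := by
  conv_lhs => rw [← Finset.univ_sum_single x, map_sum]
  refine Finset.sum_congr rfl fun i _ => ?_
  rw [← map_smul, ← Pi.single_smul', smul_eq_mul, mul_one]

section ConvexCone

variable {E : Type*} [NormedAddCommGroup E] [NormedSpace ℝ E]

theorem isCompact_convexHull [FiniteDimensional ℝ E] {s : Set E} (hs : IsCompact s) :
    IsCompact (convexHull ℝ s) := by
  rcases s.eq_empty_or_nonempty with rfl | ⟨v₀, hv₀⟩
  · simp
  set N := Module.finrank ℝ E + 1
  suffices convexHull ℝ s = (fun q : (Fin N → ℝ) × (Fin N → E) => ∑ i, q.1 i • q.2 i) ''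
      (stdSimplex ℝ (Fin N) ×ˢ univ.pi fun _ => s) by
    rw [this]
    exact ((isCompact_stdSimplex _ _).prod (isCompact_univ_pi fun _ => hs)).image (by fun_prop)
  refine Subset.antisymm (fun x hx => ?_) ?_
  · obtain ⟨ι, _, z, w, hzs, hz, hw0, hw1, rfl⟩ := eq_pos_convex_span_of_mem_convexHull hx
    have hcard : Fintype.card ι ≤ N :=
      hz.card_le_finrank_succ.trans (Nat.add_le_add_right (Submodule.finrank_le _) 1)
    obtain ⟨e⟩ : Nonempty (ι ↪ Fin N) := Embedding.nonempty_of_card_le (by simpa using hcard)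
    refine ⟨(extend e w 0, extend e z fun _ => v₀), ⟨⟨fun j => ?_, ?_⟩, fun j _ => ?_⟩, ?_⟩
    · by_cases h : ∃ i, e i = j
      · obtain ⟨i, rfl⟩ := h
        simpa [e.injective.extend_apply] using (hw0 i).le
      · simp [extend_apply' _ _ _ h]
    · rw [← hw1]
      exact (Fintype.sum_of_injective e e.injective w (extend e w 0)
        (fun j hj => extend_apply' _ _ _ hj) fun i => (e.injective.extend_apply _ _ _).symm).symm
    · by_cases h : ∃ i, e i = j
      · obtain ⟨i, rfl⟩ := h
        simpa [e.injective.extend_apply] using hzs (mem_range_self i)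
      · simpa [extend_apply' _ _ _ h] using hv₀
    · exact (Fintype.sum_of_injective e e.injective _ _
        (fun j hj => by simp [extend_apply' _ _ _ hj])
        fun i => by simp [e.injective.extend_apply]).symm
  · rintro _ ⟨q, ⟨hw, hz⟩, rfl⟩
    exact mem_convexHull_of_exists_fintype _ _ hw.1 hw.2 (fun i => hz i trivial) rfl

theorem exists_eq_smul_of_mem_hull {S : Set E} (hS : S.Nonempty) {x : E}
    (hx : x ∈ PointedCone.hull ℝ S) : ∃ t : ℝ, 0 ≤ t ∧ ∃ w ∈ convexHull ℝ S, x = t • w := by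
  obtain ⟨c, hcS, hc0, rfl⟩ := PointedCone.mem_hull_set.1 hx
  rcases c.support.eq_empty_or_nonempty with hc | hc
  · obtain ⟨w, hw⟩ := hS
    exact ⟨0, le_rfl, w, subset_convexHull ℝ S hw, by simp [Finsupp.support_eq_empty.1 hc]⟩
  have hm : 0 < ∑ y ∈ c.support, c y :=
    Finset.sum_pos (fun y hy => (hc0 y).lt_of_ne' (Finsupp.mem_support_iff.1 hy)) hc
  refine ⟨_, hm.le, c.support.centerMass c id,
    c.support.centerMass_mem_convexHull (fun y _ => hc0 y) hm fun y hy => hcS hy, ?_⟩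
  rw [Finset.centerMass, smul_smul, mul_inv_cancel₀ hm.ne', one_smul]
  rfl

theorem isClosed_hull_of_isCompact [FiniteDimensional ℝ E] {S : Set E} (hS : IsCompact S)
    (φ : StrongDual ℝ E) (hφ : ∀ v ∈ S, φ v = 1) : IsClosed (PointedCone.hull ℝ S : Set E) := by
  rcases S.eq_empty_or_nonempty with rfl | hne
  · simp
  have hφC : ∀ w ∈ convexHull ℝ S, φ w = 1 := fun w hw =>
    convexHull_min hφ (convex_hyperplane φ.toLinearMap.isLinear 1) hw
  have hslab : ∀ R, (PointedCone.hull ℝ S : Set E) ∩ {x | φ x < R} ⊆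
      (fun p : ℝ × E => p.1 • p.2) '' (Icc 0 R ×ˢ convexHull ℝ S) := by
    rintro R x ⟨hx, hxR⟩
    obtain ⟨t, ht, w, hw, rfl⟩ := exists_eq_smul_of_mem_hull hne hx
    have : φ (t • w) = t := by simp [hφC w hw]
    exact ⟨(t, w), ⟨⟨ht, (this ▸ hxR : t < R).le⟩, hw⟩, rfl⟩
  have himage : ∀ R, (fun p : ℝ × E => p.1 • p.2) '' (Icc 0 R ×ˢ convexHull ℝ S) ⊆
      PointedCone.hull ℝ S := by
    rintro R _ ⟨⟨t, w⟩, ⟨⟨ht, -⟩, hw⟩, rfl⟩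
    exact (PointedCone.hull ℝ S).smul_mem ht
      (convexHull_min PointedCone.subset_hull (PointedCone.convex _) hw)
  -- Near `z`, inside the half-space `φ < φ z + 1`, the cone is the image of a compact set.
  refine isClosed_of_closure_subset fun z hz => ?_
  have hU : IsOpen {x | φ x < φ z + 1} := isOpen_lt φ.continuous continuous_const
  have hC := ((isCompact_Icc (a := (0 : ℝ)) (b := φ z + 1)).prod (isCompact_convexHull hS)).image
    (continuous_fst.smul continuous_snd)
  exact himage _ <| hC.isClosed.closure_subset_iff.2 (inter_comm _ _ ▸ hslab _) <|
    hU.inter_closure ⟨show φ z < φ z + 1 from lt_add_one _, hz⟩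

theorem exists_pos_eq_zero_of_notMem_hull [FiniteDimensional ℝ E] {S : Set E} (hS : IsCompact S)
    (φ : StrongDual ℝ E) (hφ : ∀ v ∈ S, φ v = 1) {b : E} (hb : b ∉ PointedCone.hull ℝ S)
    (hφb : 0 < φ b) : ∃ g : StrongDual ℝ E, (∀ v ∈ S, 0 < g v) ∧ g b = 0 := by
  obtain ⟨f, hfS, hfb⟩ := ProperCone.hyperplane_separation_point
    ⟨PointedCone.hull ℝ S, isClosed_hull_of_isCompact hS φ hφ⟩ hb
  set t := -f b / φ b
  have ht : 0 < t := div_pos (neg_pos.2 hfb) hφb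
  refine ⟨f + t • φ, fun v hv => ?_, ?_⟩
  · rw [add_apply, smul_apply, hφ v hv, smul_eq_mul, mul_one]
    exact add_pos_of_nonneg_of_pos (hfS v (PointedCone.subset_hull hv)) ht
  · rw [add_apply, smul_apply, smul_eq_mul, div_mul_cancel₀ _ hφb.ne', add_neg_cancel]

end ConvexCone

section SupportedMeasure

variable {X : Type*} [MeasurableSpace X]

theorem integral_finsetSum_smul_dirac {ι : Type*} [MeasurableSingletonClass X] (s : Finset ι)
    (c : ι → NNReal) (x : ι → X) (f : X → ℝ) :
    ∫ a, f a ∂(∑ i ∈ s, c i • Measure.dirac (x i)) = ∑ i ∈ s, c i * f (x i) := by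
  rw [integral_finsetSum_measure fun i _ => (integrable_dirac enorm_lt_top).smul_measure_nnreal]
  simp only [integral_smul_nnreal_measure, integral_dirac, NNReal.smul_def, smul_eq_mul]

variable [TopologicalSpace X] [T2Space X] [OpensMeasurableSpace X]
  {μ : Measure X} [IsFiniteMeasure μ] {K : Set X}

theorem Continuous.integrable_of_measure_compl_eq_zero_s7 {g : X → ℝ} (hg : Continuous g)
    (hK : IsCompact K) (hμK : μ Kᶜ = 0) : Integrable g μ := by
  rw [← Measure.restrict_eq_self_of_ae_mem (ae_iff.2 hμK)]
  exact hg.continuousOn.integrableOn_compact hK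

theorem integral_pos_of_pos_on_compact {g : X → ℝ} (hg : Continuous g) (hK : IsCompact K)
    (hμK : μ Kᶜ = 0) (hμ : μ ≠ 0) (hpos : ∀ a ∈ K, 0 < g a) : 0 < ∫ a, g a ∂μ := by
  have hKg : ∀ᵐ a ∂μ, a ∈ K := ae_iff.2 hμK
  rw [integral_pos_iff_support_of_nonneg_ae (hKg.mono fun a ha => (hpos a ha).le)
    (hg.integrable_of_measure_compl_eq_zero_s7 hK hμK)]
  refine pos_iff_ne_zero.2 fun h => hμ (Measure.measure_univ_eq_zero.1 ?_)
  rw [← union_compl_self K]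
  exact measure_union_null (measure_mono_null (fun a ha => (hpos a ha).ne') h) hμK

end SupportedMeasure

section Moments

variable {n d : ℕ}

abbrev TruncIndex (n d : ℕ) := {α : Fin n →₀ ℕ // expDeg α ≤ d}

noncomputable instance : Fintype (TruncIndex n d) := (Finsupp.finite_of_degree_le d).fintype

def truncate (d : ℕ) (y : (Fin n →₀ ℕ) → ℝ) : TruncIndex n d → ℝ := fun i => y i.1

def diracMoments (x : Fin n → ℝ) : (Fin n →₀ ℕ) → ℝ := fun α => ∏ j, x j ^ α j

theorem continuous_diracMoments (α : Fin n →₀ ℕ) :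
    Continuous fun x : Fin n → ℝ => diracMoments x α := by
  unfold diracMoments
  fun_prop

theorem riesz_diracMoments (x : Fin n → ℝ) (p : MvPolynomial (Fin n) ℝ) :
    riesz (diracMoments x) p = eval x p :=
  (eval_eq' x p).symm

theorem riesz_eq_sum_truncIndex (y : (Fin n →₀ ℕ) → ℝ) {p : MvPolynomial (Fin n) ℝ}
    (hp : p.totalDegree ≤ d) : riesz y p = ∑ i : TruncIndex n d, coeff i.1 p * y i.1 := by
  refine (Finset.sum_subset (fun α hα => ?_) fun α _ hα => ?_).trans
    (Finset.sum_map Finset.univ (Embedding.subtype _) fun α => coeff α p * y α)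
  · exact Finset.mem_map_of_mem _
      (Finset.mem_univ (⟨α, (le_totalDegree hα).trans hp⟩ : TruncIndex n d))
  · rw [notMem_support_iff.1 hα, zero_mul]

noncomputable def dualToPoly (f : (TruncIndex n d → ℝ) →ₗ[ℝ] ℝ) : MvPolynomial (Fin n) ℝ :=
  ∑ i, monomial i.1 (f (Pi.single i 1))

theorem totalDegree_dualToPoly_le (f : (TruncIndex n d → ℝ) →ₗ[ℝ] ℝ) :
    (dualToPoly f).totalDegree ≤ d :=
  (totalDegree_finsetSum _ _).trans <|
    Finset.sup_le fun i _ => (totalDegree_monomial_le _ _).trans i.2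

theorem coeff_dualToPoly (f : (TruncIndex n d → ℝ) →ₗ[ℝ] ℝ) (i : TruncIndex n d) :
    coeff i.1 (dualToPoly f) = f (Pi.single i 1) := by
  classical
  rw [dualToPoly, coeff_sum, Fintype.sum_eq_single i fun j hj => ?_, coeff_monomial, if_pos rfl]
  rw [coeff_monomial, if_neg (Subtype.val_injective.ne hj)]

theorem riesz_dualToPoly (f : (TruncIndex n d → ℝ) →ₗ[ℝ] ℝ) (y : (Fin n →₀ ℕ) → ℝ) :
    riesz y (dualToPoly f) = f (truncate d y) := by
  classical
  rw [riesz_eq_sum_truncIndex y (totalDegree_dualToPoly_le f), f.apply_eq_sum_smul_single]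
  simp only [coeff_dualToPoly, truncate, smul_eq_mul, mul_comm]

/-- By Tchakaloff's theorem this is the paper's moment cone `𝓜(K)_d`. -/
def momentCone (d : ℕ) (K : Set (Fin n → ℝ)) : PointedCone ℝ (TruncIndex n d → ℝ) :=
  PointedCone.hull ℝ ((fun x => truncate d (diracMoments x)) '' K)

theorem exists_represents_of_truncate_mem_momentCone {K : Set (Fin n → ℝ)}
    {y : (Fin n →₀ ℕ) → ℝ} (hy : truncate d y ∈ momentCone d K) :
    ∃ μ : Measure (Fin n → ℝ), IsFiniteMeasure μ ∧ Represents d μ K y := by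
  obtain ⟨t, htK, c, hc⟩ := (Submodule.mem_span_image_iff_exists_fun _).1 hy
  refine ⟨∑ x : t, (c x : ℝ).toNNReal • Measure.dirac (x : Fin n → ℝ), inferInstance, ?_,
    fun α hα => ?_⟩
  · simp [fun x : t => htK x.2]
  · rw [integral_finsetSum_smul_dirac]
    change truncate d y ⟨α, hα⟩ = _
    rw [← hc]
    simp only [Finset.sum_apply, Pi.smul_apply, ← Nonneg.coe_smul, smul_eq_mul,
      Real.coe_toNNReal _ (c _).2, truncate, diracMoments]

theorem exists_pos_eq_zero_of_truncate_notMem_momentCone {K : Set (Fin n → ℝ)}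
    (hK : IsCompact K) {y : (Fin n →₀ ℕ) → ℝ} (hy0 : 0 < y 0)
    (hy : truncate d y ∉ momentCone d K) :
    ∃ g : StrongDual ℝ (TruncIndex n d → ℝ),
      (∀ x ∈ K, 0 < g (truncate d (diracMoments x))) ∧ g (truncate d y) = 0 := by
  let φ := ContinuousLinearMap.proj (R := ℝ) (φ := fun _ : TruncIndex n d => ℝ)
    ⟨0, by simp [expDeg]⟩
  obtain ⟨g, hgK, hgy⟩ := exists_pos_eq_zero_of_notMem_hull
    (hK.image (continuous_pi fun i : TruncIndex n d => continuous_diracMoments i.1)) φ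
    (by rintro _ ⟨x, -, rfl⟩; simp [φ, diracMoments]) hy hy0
  exact ⟨g, fun x hx => hgK _ (mem_image_of_mem _ hx), hgy⟩

theorem riesz_eq_integral {K : Set (Fin n → ℝ)} (hK : IsCompact K) {y : (Fin n →₀ ℕ) → ℝ}
    {μ : Measure (Fin n → ℝ)} [IsFiniteMeasure μ] (hμ : Represents d μ K y)
    {p : MvPolynomial (Fin n) ℝ} (hp : p.totalDegree ≤ d) :
    riesz y p = ∫ a, eval a p ∂μ := by
  simp_rw [← riesz_diracMoments, riesz_eq_sum_truncIndex _ hp]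
  rw [integral_finsetSum _ fun i _ =>
    ((continuous_diracMoments i.1).integrable_of_measure_compl_eq_zero_s7 hK hμ.1).const_mul _]
  refine Finset.sum_congr rfl fun i _ => ?_
  rw [integral_const_mul, hμ.2 i.1 i.2]
  rfl

theorem riesz_pos_of_represents {K : Set (Fin n → ℝ)} (hK : IsCompact K)
    {y : (Fin n →₀ ℕ) → ℝ} (hy0 : 0 < y 0) {μ : Measure (Fin n → ℝ)} [IsFiniteMeasure μ]
    (hμ : Represents d μ K y) {p : MvPolynomial (Fin n) ℝ} (hp : p.totalDegree ≤ d)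
    (hpos : ∀ a ∈ K, 0 < eval a p) : 0 < riesz y p := by
  have hμ0 : μ ≠ 0 := by
    rintro rfl
    exact hy0.ne' <| (hμ.2 0 (by simp [expDeg])).trans (integral_zero_measure _)
  rw [riesz_eq_integral hK hμ hp]
  exact integral_pos_of_pos_on_compact p.continuous_eval hK hμ.1 hμ0 hpos

end Moments

/-- Strong alternative: for compact `K` and `y₀ > 0`, `y` is NOT moment-representable on
`K` iff there is a polynomial of degree `≤ d` strictly positive on `K` annihilated by the
Riesz functional `L_y`. -/
theorem stmt7 {n d : ℕ} (K : Set (Fin n → ℝ)) (hK : IsCompact K)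
    (y : (Fin n →₀ ℕ) → ℝ) (hy0 : 0 < y 0) :
    (¬ ∃ μ : Measure (Fin n → ℝ), IsFiniteMeasure μ ∧ Represents d μ K y) ↔
      ∃ p : MvPolynomial (Fin n) ℝ, p.totalDegree ≤ d ∧
        (∀ a ∈ K, 0 < MvPolynomial.eval a p) ∧ riesz y p = 0 := by
  refine ⟨fun hno => ?_, ?_⟩
  · obtain ⟨g, hgK, hgy⟩ := exists_pos_eq_zero_of_truncate_notMem_momentCone hK hy0
      fun hy => hno (exists_represents_of_truncate_mem_momentCone hy)
    refine ⟨dualToPoly g.toLinearMap, totalDegree_dualToPoly_le _, fun a ha => ?_, ?_⟩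
    · rw [← riesz_diracMoments, riesz_dualToPoly]
      exact hgK a ha
    · rw [riesz_dualToPoly]
      exact hgy
  · rintro ⟨p, hp, hpos, hzero⟩ ⟨μ, _, hμ⟩
    exact (riesz_pos_of_represents hK hy0 hμ hp hpos).ne' hzero
end
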